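/- Let χ : ℝ^d → [0,1] be a Lipschitz probability density supported in the Euclidean unit ball, ε ∈ (0,1), χ_ε(x) = ε^{-d} χ(x/ε), and for η : ℝ^d → ℝ Lipschitz with constant ≤ 1, supported in B_R, and η ≡ 0 outside B_R, define the discrete convolution η^ε_N(x) = N^{-d} Σ_{y∈ℤ^d} χ_ε(x − y/N) η(y/N). Then limsup_N sup_η sup_{x ∈ B_{R−ε}} |η^ε_N(x) − η(x)| ≤ ε ∫ χ(y)|y| dy, where the middle supremum runs over all η ∈ Lip_1(B_R) with ‖η‖_∞ ≤ 1 (extended by zero). -/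

import Mathlib

open MeasureTheory Filter

noncomputable section

/-- Points of the lattice `ℤ^d`. -/
abbrev Zd (d : ℕ) := Fin d → ℤ

/-- The closed box `B_ρ = [−ρ,ρ]^d ⊆ ℝ^d`. -/
def boxR (d : ℕ) (ρ : ℝ) : Set (EuclideanSpace ℝ (Fin d)) := {x | ∀ i, |x i| ≤ ρ}

/-- The embedding of `ℤ^d` into `ℝ^d`. -/
def embed (d : ℕ) (y : Zd d) : EuclideanSpace ℝ (Fin d) := WithLp.toLp 2 (fun i => (y i : ℝ))

/-!
For fixed `x`, the discrete convolution is a Riemann sum over the lattice `N⁻¹ℤ^d` of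
`z ↦ χ_ε(x - z) η(z)`. Writing `η(z) = η(x) + (η(z) - η(x))` and using `|η(z) - η(x)| ≤ |x - z|`
on the support of `χ_ε(x - ·)` (which stays inside `B_R` because `x ∈ B_{R-ε}`), the error is at
most the Riemann sum of `χ_ε(x - z)|x - z|` plus the deviation of the Riemann sum of `χ_ε(x - ·)`
from `1`. Both functions are Lipschitz and supported in the unit ball around `x`, so their Riemann
sums differ from their integrals `ε ∫ χ(y)|y| dy` and `1` by `O(1/N)`, uniformly in `x` and `η`:
compare the sum and the integral on each cube of side `1/N`; only `O(N^d)` cubes meet the support.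
-/

open Metric Function
open scoped NNReal

section

variable {d N : ℕ}

lemma EuclideanSpace.norm_le_sqrt_card_mul {w : EuclideanSpace ℝ (Fin d)} {c : ℝ} (hc : 0 ≤ c)
    (h : ∀ i, |w i| ≤ c) : ‖w‖ ≤ √d * c := by
  rw [EuclideanSpace.norm_eq, ← Real.sqrt_sq hc, ← Real.sqrt_mul (Nat.cast_nonneg d)]
  refine Real.sqrt_le_sqrt ?_
  calc ∑ i, ‖w i‖ ^ 2 ≤ ∑ _i : Fin d, c ^ 2 := by
        gcongr with i
        rw [Real.norm_eq_abs]
        exact h i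
    _ = d * c ^ 2 := by simp

lemma mem_boxR_of_dist_le {R ε : ℝ} {x z : EuclideanSpace ℝ (Fin d)} (hx : x ∈ boxR d (R - ε))
    (hz : dist z x ≤ ε) : z ∈ boxR d R := fun i => by
  have hzi : |z i - x i| ≤ ε := (PiLp.dist_apply_le z x i).trans hz
  have := abs_sub_abs_le_abs_sub (z i) (x i)
  linarith [hx i]

def cube (N : ℕ) (y : Zd d) : Set (EuclideanSpace ℝ (Fin d)) :=
  {z | ∀ i, z i ∈ Set.Ico ((y i : ℝ) / N) ((y i + 1) / N)}

lemma mem_cube_iff (hN : 0 < N) {y : Zd d} {z : EuclideanSpace ℝ (Fin d)} :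
    z ∈ cube N y ↔ ∀ i, ⌊(N : ℝ) * z i⌋ = y i := by
  have hN' : (0 : ℝ) < N := by exact_mod_cast hN
  refine forall_congr' fun i => ?_
  rw [Set.mem_Ico, Int.floor_eq_iff, div_le_iff₀ hN', lt_div_iff₀ hN', mul_comm (z i)]

lemma latticePt_mem_cube (hN : 0 < N) (y : Zd d) : (N : ℝ)⁻¹ • embed d y ∈ cube N y := by
  have hN' : (N : ℝ) ≠ 0 := by exact_mod_cast hN.ne'
  rw [mem_cube_iff hN]
  intro i
  simp [embed, hN']

lemma pairwise_disjoint_cube (hN : 0 < N) : Pairwise (Disjoint on cube (d := d) N) := by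
  intro y y' hne
  refine Set.disjoint_left.2 fun z hz hz' => hne (funext fun i => ?_)
  rw [← (mem_cube_iff hN).1 hz i, (mem_cube_iff hN).1 hz' i]

lemma iUnion_cube (hN : 0 < N) : ⋃ y : Zd d, cube N y = Set.univ :=
  Set.eq_univ_of_forall fun z =>
    Set.mem_iUnion.2 ⟨fun i => ⌊(N : ℝ) * z i⌋, (mem_cube_iff hN).2 fun _ => rfl⟩

lemma cube_eq_preimage (N : ℕ) (y : Zd d) :
    cube N y = (MeasurableEquiv.toLp 2 (Fin d → ℝ)).symm ⁻¹'
      Set.univ.pi fun i => Set.Ico ((y i : ℝ) / N) ((y i + 1) / N) := by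
  ext z
  simp [cube]

lemma measurableSet_cube (N : ℕ) (y : Zd d) : MeasurableSet (cube N y) := by
  rw [cube_eq_preimage]
  exact (MeasurableEquiv.toLp 2 (Fin d → ℝ)).symm.measurable
    (MeasurableSet.univ_pi fun _ => measurableSet_Ico)

lemma volume_cube (N : ℕ) (y : Zd d) :
    volume (cube N y) = ENNReal.ofReal (1 / (N : ℝ) ^ d) := by
  rw [cube_eq_preimage, (EuclideanSpace.volume_preserving_symm_measurableEquiv_toLp (Fin d))
    |>.measure_preimage (MeasurableSet.univ_pi fun _ => measurableSet_Ico).nullMeasurableSet,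
    volume_pi_pi]
  have hlen : ∀ i, ((y i : ℝ) + 1) / N - y i / N = 1 / N := fun i => by ring
  simp only [Real.volume_Ico, hlen, Finset.prod_const, Finset.card_univ, Fintype.card_fin]
  rw [← ENNReal.ofReal_pow (by positivity), one_div_pow]

lemma measureReal_cube (N : ℕ) (y : Zd d) : volume.real (cube N y) = 1 / (N : ℝ) ^ d := by
  rw [measureReal_def, volume_cube N, ENNReal.toReal_ofReal (by positivity)]

lemma dist_latticePt_le {y : Zd d} {z : EuclideanSpace ℝ (Fin d)}
    (hz : z ∈ cube N y) : dist z ((N : ℝ)⁻¹ • embed d y) ≤ √d / N := by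
  rw [dist_eq_norm, div_eq_mul_one_div]
  refine EuclideanSpace.norm_le_sqrt_card_mul (by positivity) fun i => ?_
  obtain ⟨h1, h2⟩ := hz i
  have : ((N : ℝ)⁻¹ • embed d y) i = (y i : ℝ) / N := by simp [embed, div_eq_inv_mul]
  rw [PiLp.sub_apply, this, abs_of_nonneg (by linarith)]
  rw [add_div] at h2
  linarith

/-- The lattice points `y` whose cube `cube N y` can meet the closed unit ball around `x`. -/
def window (N : ℕ) (x : EuclideanSpace ℝ (Fin d)) : Finset (Zd d) :=
  Fintype.piFinset fun i => Finset.Icc ⌊(N : ℝ) * (x i - 1)⌋ ⌊(N : ℝ) * (x i + 1)⌋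

lemma card_window_le (hN : 0 < N) (x : EuclideanSpace ℝ (Fin d)) :
    (window N x).card ≤ (3 * N) ^ d := by
  rw [window, Fintype.card_piFinset]
  refine (Finset.prod_le_prod' (g := fun _ => 3 * N) fun i _ => ?_).trans (by simp)
  rw [Int.card_Icc]
  have hlt : (⌊(N : ℝ) * (x i + 1)⌋ : ℝ) - ⌊(N : ℝ) * (x i - 1)⌋ < 2 * N + 1 := by
    linarith [Int.floor_le ((N : ℝ) * (x i + 1)), Int.lt_floor_add_one ((N : ℝ) * (x i - 1))]
  have : ⌊(N : ℝ) * (x i + 1)⌋ - ⌊(N : ℝ) * (x i - 1)⌋ < 2 * N + 1 := by exact_mod_cast hlt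
  omega

lemma mem_window_of_mem_cube (hN : 0 < N) {x z : EuclideanSpace ℝ (Fin d)} {y : Zd d}
    (hz : z ∈ cube N y) (hzx : dist z x ≤ 1) : y ∈ window N x := by
  rw [window, Fintype.mem_piFinset]
  intro i
  have hzi : |z i - x i| ≤ 1 := (PiLp.dist_apply_le z x i).trans hzx
  rw [← (mem_cube_iff hN).1 hz i, Finset.mem_Icc, abs_le] at *
  exact ⟨Int.floor_mono (by gcongr; linarith), Int.floor_mono (by gcongr; linarith)⟩

def latticeRiemannSum (N : ℕ) (f : EuclideanSpace ℝ (Fin d) → ℝ) : ℝ :=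
  1 / (N : ℝ) ^ d * ∑' y : Zd d, f ((N : ℝ)⁻¹ • embed d y)

section RiemannSum

variable {f : EuclideanSpace ℝ (Fin d) → ℝ} {x : EuclideanSpace ℝ (Fin d)}

lemma latticeRiemannSum_eq_sum_window (hN : 0 < N) (hf : support f ⊆ closedBall x 1) :
    latticeRiemannSum N f = 1 / (N : ℝ) ^ d * ∑ y ∈ window N x, f ((N : ℝ)⁻¹ • embed d y) := by
  rw [latticeRiemannSum, tsum_eq_sum fun y hy => ?_]
  by_contra hne
  exact hy (mem_window_of_mem_cube hN (latticePt_mem_cube hN y) (hf hne))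

lemma integral_eq_sum_window (hN : 0 < N) (hf : Integrable f) (hsupp : support f ⊆ closedBall x 1) :
    ∫ z, f z = ∑ y ∈ window N x, ∫ z in cube N y, f z := by
  rw [← setIntegral_univ, ← iUnion_cube hN,
    integral_iUnion (measurableSet_cube N) (pairwise_disjoint_cube hN) hf.integrableOn,
    tsum_eq_sum fun y hy => ?_]
  refine setIntegral_eq_zero_of_forall_eq_zero fun z hz => ?_
  by_contra hne
  exact hy (mem_window_of_mem_cube hN hz (hsupp hne))

lemma abs_integral_cube_sub_le {K : ℝ≥0} (hf : LipschitzWith K f) (N : ℕ) (y : Zd d) :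
    |(∫ z in cube N y, f z) - 1 / (N : ℝ) ^ d * f ((N : ℝ)⁻¹ • embed d y)|
      ≤ K * (√d / N) * (1 / (N : ℝ) ^ d) := by
  have hfin : volume (cube N y) < ⊤ := by rw [volume_cube N]; exact ENNReal.ofReal_lt_top
  have hcube : cube N y ⊆ closedBall ((N : ℝ)⁻¹ • embed d y) (√d / N) :=
    fun z hz => dist_latticePt_le hz
  have hint : IntegrableOn f (cube N y) :=
    (hf.continuous.continuousOn.integrableOn_compact (isCompact_closedBall _ _)).mono_set hcube
  rw [← measureReal_cube N y, ← smul_eq_mul, ← setIntegral_const,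
    ← integral_sub hint (integrableOn_const hfin.ne), ← Real.norm_eq_abs]
  refine norm_setIntegral_le_of_norm_le_const hfin fun z hz => ?_
  rw [← dist_eq_norm]
  exact hf.dist_le_mul_of_le (hcube hz)

theorem abs_latticeRiemannSum_sub_integral_le {K : ℝ≥0} (hf : LipschitzWith K f)
    (hsupp : support f ⊆ closedBall x 1) (hN : 0 < N) :
    |latticeRiemannSum N f - ∫ z, f z| ≤ K * √d * 3 ^ d / N := by
  have hint : Integrable f :=
    hf.continuous.integrable_of_hasCompactSupport <|
      HasCompactSupport.of_support_subset_isCompact (isCompact_closedBall x 1) hsupp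
  rw [latticeRiemannSum_eq_sum_window hN hsupp, integral_eq_sum_window hN hint hsupp,
    Finset.mul_sum, ← Finset.sum_sub_distrib]
  calc _ ≤ ∑ y ∈ window N x,
        |1 / (N : ℝ) ^ d * f ((N : ℝ)⁻¹ • embed d y) - ∫ z in cube N y, f z| :=
        Finset.abs_sum_le_sum_abs _ _
    _ ≤ ∑ _y ∈ window N x, K * (√d / N) * (1 / (N : ℝ) ^ d) :=
        Finset.sum_le_sum fun y _ => by
          rw [abs_sub_comm]
          exact abs_integral_cube_sub_le hf N y
    _ ≤ ((3 * N) ^ d : ℕ) * (K * (√d / N) * (1 / (N : ℝ) ^ d)) := by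
        rw [Finset.sum_const, nsmul_eq_mul]
        gcongr
        exact card_window_le hN x
    _ = K * √d * 3 ^ d / N := by
        have hN' : (N : ℝ) ≠ 0 := by exact_mod_cast hN.ne'
        push_cast
        field_simp
        ring

end RiemannSum

lemma LipschitzWith.mul_norm {E : Type*} [SeminormedAddCommGroup E] {g : E → ℝ} {K M r : ℝ≥0}
    (hg : LipschitzWith K g) (hM : ∀ w, |g w| ≤ M) (hr : support g ⊆ closedBall 0 r) :
    LipschitzWith (M + K * r) fun w => g w * ‖w‖ := by
  refine LipschitzWith.of_dist_le_mul fun a b => ?_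
  wlog hb : ‖b‖ ≤ r generalizing a b
  · by_cases ha : ‖a‖ ≤ r
    · rw [dist_comm, dist_comm a]
      exact this b a ha
    · have hzero : ∀ w, ¬‖w‖ ≤ r → g w = 0 := fun w hw =>
        support_subset_iff'.1 hr w (by rwa [mem_closedBall_zero_iff])
      simp only [hzero a ha, hzero b hb, zero_mul, dist_self]
      positivity
  have hab : |‖a‖ - ‖b‖| ≤ dist a b := by
    rw [dist_eq_norm]
    exact abs_norm_sub_norm_le a b
  have hgab : |g a - g b| ≤ K * dist a b := by
    rw [← Real.dist_eq]
    exact hg.dist_le_mul a b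
  rw [Real.dist_eq, show g a * ‖a‖ - g b * ‖b‖ = g a * (‖a‖ - ‖b‖) + (g a - g b) * ‖b‖ by ring]
  calc _ ≤ |g a| * |‖a‖ - ‖b‖| + |g a - g b| * ‖b‖ := by
        simpa only [abs_mul, abs_norm] using
          abs_add_le (g a * (‖a‖ - ‖b‖)) ((g a - g b) * ‖b‖)
    _ ≤ M * dist a b + K * dist a b * r := by gcongr; exact hM a
    _ = _ := by push_cast; ring

def rescaledKernel (χ : EuclideanSpace ℝ (Fin d) → ℝ) (ε : ℝ) (w : EuclideanSpace ℝ (Fin d)) : ℝ :=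
  (ε ^ d)⁻¹ * χ (ε⁻¹ • w)

section RescaledKernel

variable {χ : EuclideanSpace ℝ (Fin d) → ℝ} {ε : ℝ}

lemma integral_rescaledKernel_mul (hε : 0 < ε) (g : EuclideanSpace ℝ (Fin d) → ℝ) :
    ∫ w, rescaledKernel χ ε w * g w = ∫ y, χ y * g (ε • y) := by
  have hscale := Measure.integral_comp_inv_smul_of_nonneg volume
    (fun y : EuclideanSpace ℝ (Fin d) => χ y * g (ε • y)) hε.le
  simp only [smul_inv_smul₀ hε.ne', finrank_euclideanSpace_fin, smul_eq_mul] at hscale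
  simp only [rescaledKernel, mul_assoc, integral_const_mul, hscale]
  field_simp

lemma integral_rescaledKernel (hε : 0 < ε) (hχ : ∫ y, χ y = 1) :
    ∫ w, rescaledKernel χ ε w = 1 := by
  simpa [hχ] using integral_rescaledKernel_mul (χ := χ) hε 1

lemma integral_rescaledKernel_mul_norm (hε : 0 < ε) :
    ∫ w, rescaledKernel χ ε w * ‖w‖ = ε * ∫ y, χ y * ‖y‖ := by
  rw [integral_rescaledKernel_mul hε, ← integral_const_mul]
  congr 1 with y
  rw [norm_smul, Real.norm_of_nonneg hε.le]
  ring

lemma rescaledKernel_nonneg (hε : 0 < ε) (hχ : ∀ y, 0 ≤ χ y) (w : EuclideanSpace ℝ (Fin d)) :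
    0 ≤ rescaledKernel χ ε w :=
  mul_nonneg (by positivity) (hχ _)

lemma abs_rescaledKernel_le (hε : 0 < ε) (hχ : ∀ y, 0 ≤ χ y ∧ χ y ≤ 1)
    (w : EuclideanSpace ℝ (Fin d)) : |rescaledKernel χ ε w| ≤ (ε ^ d)⁻¹ := by
  rw [abs_of_nonneg (rescaledKernel_nonneg hε (fun y => (hχ y).1) w)]
  exact mul_le_of_le_one_right (by positivity) (hχ _).2

lemma support_rescaledKernel_subset (hε : 0 < ε) (hχ : ∀ y, 1 < ‖y‖ → χ y = 0) :
    support (rescaledKernel χ ε) ⊆ closedBall 0 ε := by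
  intro w hw
  rw [mem_closedBall_zero_iff]
  by_contra hlt
  refine hw (mul_eq_zero_of_right _ (hχ _ ?_))
  rw [norm_smul, norm_inv, Real.norm_of_nonneg hε.le, lt_inv_mul_iff₀ hε, mul_one]
  exact not_le.1 hlt

lemma lipschitzWith_rescaledKernel {K : ℝ≥0} (hχ : LipschitzWith K χ) :
    LipschitzWith (‖(ε ^ d)⁻¹‖₊ * (K * ‖ε⁻¹‖₊)) (rescaledKernel χ ε) :=
  (lipschitzWith_smul _).comp (hχ.comp (lipschitzWith_smul _))

end RescaledKernel

section Convolution

variable {x : EuclideanSpace ℝ (Fin d)}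

lemma support_comp_sub_subset {g : EuclideanSpace ℝ (Fin d) → ℝ} {r : ℝ}
    (hg : support g ⊆ closedBall 0 r) : support (fun z => g (x - z)) ⊆ closedBall x r :=
  fun z hz => by simpa [dist_eq_norm, norm_sub_rev] using hg hz

lemma abs_latticeRiemannSum_mul_sub_le {w η v : EuclideanSpace ℝ (Fin d) → ℝ} {a : ℝ}
    (hN : 0 < N) (hw : ∀ z, 0 ≤ w z) (hws : support w ⊆ closedBall x 1)
    (hvs : support v ⊆ closedBall x 1) (ha : |a| ≤ 1) (hwv : ∀ z, w z * |η z - a| ≤ v z) :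
    |latticeRiemannSum N (fun z => w z * η z) - a|
      ≤ latticeRiemannSum N v + |latticeRiemannSum N w - 1| := by
  have hwηs : support (fun z => w z * η z) ⊆ closedBall x 1 :=
    (support_mul_subset_left _ _).trans hws
  rw [latticeRiemannSum_eq_sum_window hN hwηs, latticeRiemannSum_eq_sum_window hN hws,
    latticeRiemannSum_eq_sum_window hN hvs]
  set c : ℝ := 1 / (N : ℝ) ^ d
  set p : Zd d → EuclideanSpace ℝ (Fin d) := fun y => (N : ℝ)⁻¹ • embed d y
  have hsplit : c * ∑ y ∈ window N x, w (p y) * η (p y) - a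
      = c * ∑ y ∈ window N x, w (p y) * (η (p y) - a)
        + (c * ∑ y ∈ window N x, w (p y) - 1) * a := by
    simp only [mul_sub, Finset.sum_sub_distrib, ← Finset.sum_mul]
    ring
  have hsum : |∑ y ∈ window N x, w (p y) * (η (p y) - a)| ≤ ∑ y ∈ window N x, v (p y) :=
    (Finset.abs_sum_le_sum_abs _ _).trans <| Finset.sum_le_sum fun y _ => by
      rw [abs_mul, abs_of_nonneg (hw _)]
      exact hwv _
  rw [hsplit]
  calc _ ≤ c * |∑ y ∈ window N x, w (p y) * (η (p y) - a)|
        + |c * ∑ y ∈ window N x, w (p y) - 1| * |a| := by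
        refine (abs_add_le _ _).trans ?_
        rw [abs_mul, abs_mul, abs_of_nonneg (by positivity : (0 : ℝ) ≤ c)]
    _ ≤ c * ∑ y ∈ window N x, v (p y) + |c * ∑ y ∈ window N x, w (p y) - 1| * 1 := by
        gcongr
    _ = _ := by rw [mul_one]

theorem abs_latticeRiemannSum_comp_sub_sub_integral_le {g : EuclideanSpace ℝ (Fin d) → ℝ}
    {K : ℝ≥0} (hg : LipschitzWith K g) (hsupp : support g ⊆ closedBall 0 1) (hN : 0 < N) :
    |latticeRiemannSum N (fun z => g (x - z)) - ∫ w, g w| ≤ K * √d * 3 ^ d / N := by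
  have hlip : LipschitzWith K fun z => g (x - z) := by
    have h := hg.comp (IsometryEquiv.subLeft x).isometry.lipschitz
    rwa [mul_one] at h
  rw [← integral_sub_left_eq_self g volume x]
  exact abs_latticeRiemannSum_sub_integral_le hlip (support_comp_sub_subset hsupp) hN

theorem exists_abs_discreteConvolution_sub_le {χ : EuclideanSpace ℝ (Fin d) → ℝ} {K : ℝ≥0}
    {ε : ℝ} (R : ℝ) (hε0 : 0 < ε) (hε1 : ε ≤ 1) (hχLip : LipschitzWith K χ)
    (hχ01 : ∀ y, 0 ≤ χ y ∧ χ y ≤ 1) (hχsupp : ∀ y, 1 < ‖y‖ → χ y = 0) (hχint : ∫ y, χ y = 1) :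
    ∃ C, 0 ≤ C ∧ ∀ N : ℕ, 0 < N →
      ∀ (η : EuclideanSpace ℝ (Fin d) → ℝ) (x : EuclideanSpace ℝ (Fin d)),
      LipschitzOnWith 1 η (boxR d R) → (∀ y, |η y| ≤ 1) → x ∈ boxR d (R - ε) →
      |latticeRiemannSum N (fun z => rescaledKernel χ ε (x - z) * η z) - η x|
        ≤ (ε * ∫ y, χ y * ‖y‖) + C / N := by
  set L₁ : ℝ≥0 := ‖(ε ^ d)⁻¹‖₊ * (K * ‖ε⁻¹‖₊)
  set L₂ : ℝ≥0 := ‖(ε ^ d)⁻¹‖₊ + L₁ * ‖ε‖₊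
  have hsuppε := support_rescaledKernel_subset hε0 hχsupp
  have hsupp₁ := hsuppε.trans (closedBall_subset_closedBall hε1)
  have hsupp₂ : support (fun w => rescaledKernel χ ε w * ‖w‖) ⊆ closedBall 0 1 :=
    (support_mul_subset_left _ _).trans hsupp₁
  have hlip₁ : LipschitzWith L₁ (rescaledKernel χ ε) := lipschitzWith_rescaledKernel hχLip
  have hlip₂ : LipschitzWith L₂ fun w => rescaledKernel χ ε w * ‖w‖ := by
    refine hlip₁.mul_norm (fun w => ?_) ?_
    · rw [coe_nnnorm, Real.norm_of_nonneg (by positivity)]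
      exact abs_rescaledKernel_le hε0 hχ01 w
    · rwa [coe_nnnorm, Real.norm_of_nonneg hε0.le]
  refine ⟨((L₁ : ℝ) + L₂) * √d * 3 ^ d, by positivity, fun N hN η x hη hηb hx => ?_⟩
  have r₁ := abs_latticeRiemannSum_comp_sub_sub_integral_le (x := x) hlip₁ hsupp₁ hN
  have r₂ := abs_latticeRiemannSum_comp_sub_sub_integral_le (x := x) hlip₂ hsupp₂ hN
  rw [integral_rescaledKernel hε0 hχint] at r₁
  rw [integral_rescaledKernel_mul_norm hε0] at r₂
  have hterm : ∀ z, rescaledKernel χ ε (x - z) * |η z - η x|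
      ≤ rescaledKernel χ ε (x - z) * ‖x - z‖ := fun z => by
    by_cases hz : rescaledKernel χ ε (x - z) = 0
    · simp [hz]
    have hdist : dist z x ≤ ε := by
      simpa [dist_eq_norm, norm_sub_rev] using hsuppε hz
    have hxR : x ∈ boxR d R := mem_boxR_of_dist_le hx (by simpa using hε0.le)
    refine mul_le_mul_of_nonneg_left ?_ (rescaledKernel_nonneg hε0 (fun y => (hχ01 y).1) _)
    rw [← Real.dist_eq, norm_sub_rev, ← dist_eq_norm]
    simpa using hη.dist_le_mul z (mem_boxR_of_dist_le hx hdist) x hxR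
  calc _ ≤ _ := abs_latticeRiemannSum_mul_sub_le hN
        (fun z => rescaledKernel_nonneg hε0 (fun y => (hχ01 y).1) _)
        (support_comp_sub_subset hsupp₁) (support_comp_sub_subset hsupp₂) (hηb x) hterm
    _ ≤ (ε * ∫ y, χ y * ‖y‖) + L₂ * √d * 3 ^ d / N + L₁ * √d * 3 ^ d / N :=
        add_le_add (by linarith [(abs_le.1 r₂).2]) r₁
    _ = _ := by ring

end Convolution

end

lemma limsup_le_of_le_add_div {u : ℕ → ℝ} {a C : ℝ} (h0 : ∀ N, 0 ≤ u N)
    (h : ∀ N, 0 < N → u N ≤ a + C / N) : limsup u atTop ≤ a := by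
  have hlim : Tendsto (fun N : ℕ => a + C / N) atTop (nhds a) := by
    simpa using tendsto_const_nhds.add (tendsto_const_div_atTop_nhds_zero_nat C)
  calc limsup u atTop ≤ limsup (fun N : ℕ => a + C / N) atTop :=
        limsup_le_limsup (eventually_atTop.2 ⟨1, h⟩) (isCoboundedUnder_le_of_le atTop h0)
          hlim.isBoundedUnder_le
    _ = a := hlim.limsup_eq

theorem discrete_convolution_approx_general (d : ℕ) (R ε : ℝ)
    (hε0 : 0 < ε) (hε1 : ε < 1)
    (χ : EuclideanSpace ℝ (Fin d) → ℝ)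
    (hχLip : ∃ K : NNReal, LipschitzWith K χ)
    (hχ01 : ∀ x, 0 ≤ χ x ∧ χ x ≤ 1)
    (hχsupp : ∀ x, 1 < ‖x‖ → χ x = 0)
    (hχint : ∫ x, χ x = 1) :
    limsup (fun N : ℕ =>
      sSup {v : ℝ | ∃ (η : EuclideanSpace ℝ (Fin d) → ℝ) (x : EuclideanSpace ℝ (Fin d)),
        LipschitzOnWith 1 η (boxR d R) ∧ (∀ y, |η y| ≤ 1) ∧
        (∀ y, y ∉ boxR d R → η y = 0) ∧ x ∈ boxR d (R - ε) ∧
        v = |(1 / (N : ℝ) ^ d) *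
              (∑' y : Zd d, (ε ^ d)⁻¹ * χ (ε⁻¹ • (x - (N : ℝ)⁻¹ • embed d y))
                * η ((N : ℝ)⁻¹ • embed d y))
            - η x|}) atTop
      ≤ ε * ∫ y, χ y * ‖y‖ := by
  obtain ⟨K, hK⟩ := hχLip
  obtain ⟨C, hC0, hC⟩ :=
    exists_abs_discreteConvolution_sub_le R hε0 hε1.le hK hχ01 hχsupp hχint
  have hI : 0 ≤ ∫ y, χ y * ‖y‖ := integral_nonneg fun y => mul_nonneg (hχ01 y).1 (norm_nonneg y)
  refine limsup_le_of_le_add_div (C := C) (fun N => Real.sSup_nonneg ?_)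
    fun N hN => Real.sSup_le ?_ (by positivity)
  · rintro v ⟨η, x, -, -, -, -, rfl⟩
    exact abs_nonneg _
  · rintro v ⟨η, x, hη, hηb, -, hx, rfl⟩
    exact hC N hN η x hη hηb hx

/-- Uniform approximation of Lipschitz functions by discrete convolution with a mollifier:
for `χ` a Lipschitz `[0,1]`-valued probability density supported in the Euclidean unit ball,
`ε ∈ (0,1)`, `χ_ε(x) = ε^{−d}χ(x/ε)`, and
`η^ε_N(x) = N^{−d} ∑_{y∈ℤ^d} χ_ε(x − y/N) η(y/N)`, one has
`limsup_N sup_η sup_{x ∈ B_{R−ε}} |η^ε_N(x) − η(x)| ≤ ε ∫ χ(y)|y| dy`, where `η` runs over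
the `1`-Lipschitz functions on `B_R` bounded by `1` and extended by zero outside `B_R`. -/
theorem discrete_convolution_approx (d : ℕ) (hd : 1 ≤ d) (R ε : ℝ)
    (hR : 0 < R) (hε0 : 0 < ε) (hε1 : ε < 1)
    (χ : EuclideanSpace ℝ (Fin d) → ℝ)
    (hχLip : ∃ K : NNReal, LipschitzWith K χ)
    (hχ01 : ∀ x, 0 ≤ χ x ∧ χ x ≤ 1)
    (hχsupp : ∀ x, 1 < ‖x‖ → χ x = 0)
    (hχint : ∫ x, χ x = 1) :
    limsup (fun N : ℕ =>
      sSup {v : ℝ | ∃ (η : EuclideanSpace ℝ (Fin d) → ℝ) (x : EuclideanSpace ℝ (Fin d)),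
        LipschitzOnWith 1 η (boxR d R) ∧ (∀ y, |η y| ≤ 1) ∧
        (∀ y, y ∉ boxR d R → η y = 0) ∧ x ∈ boxR d (R - ε) ∧
        v = |(1 / (N : ℝ) ^ d) *
              (∑' y : Zd d, (ε ^ d)⁻¹ * χ (ε⁻¹ • (x - (N : ℝ)⁻¹ • embed d y))
                * η ((N : ℝ)⁻¹ • embed d y))
            - η x|}) atTop
      ≤ ε * ∫ y, χ y * ‖y‖ :=
  discrete_convolution_approx_general d R ε hε0 hε1 χ hχLip hχ01 hχsupp hχint
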